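/- arXiv:1110.0390 — 4 statements merged into one kernel-verified Lean document; each statement's English description precedes it below -/
import Mathlib

section
/- Let T = k[u1, u2]/(u1 u2) with local ring at the origin having completed local ring k[[u1,u2]]/(u1u2). Every ideal I of k[[u1,u2]]/(u1u2) is either principal or of the form (u1^{a1}, u2^{a2}) for some positive integers a1, a2. -/
/-!
Restricting to the two branches `u₁ = 0` and `u₀ = 0` identifies `k⟦u₀, u₁⟧/(u₀u₁)` with the pairs
`(p, q)` in `k⟦t⟧ × k⟦t⟧` with `p(0) = q(0)`. The projections of a proper ideal `I` to the two
branches are ideals of the discrete valuation ring `k⟦t⟧`; if one of them is zero, `I` is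
principal. Otherwise they are `(t^a)` and `(t^b)`; pick `z₀ ∈ I` with first branch `t^a`.
If `u₁^b ∈ I`, subtracting a multiple of it from `z₀` gives `u₀^a ∈ I`, and `I = (u₀^a, u₁^b)`.
If not, no element of `I` vanishing on the first branch has a unit cofactor of `t^b` on the
second; subtracting multiples of `z₀` then shows that the cofactors of any `w ∈ I` relative to
`z₀` on the two branches have the same constant term, so `w ∈ (z₀)`.
-/

noncomputable section

theorem Finsupp.eq_single_of_apply_eq_zero {M : Type*} [Zero M] {s t : Fin 2} (hst : s ≠ t)
    {m : Fin 2 →₀ M} (hm : m s = 0) : m = Finsupp.single t (m t) := by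
  ext u
  obtain rfl | rfl : u = s ∨ u = t := by omega
  · simp [hm, hst]
  · simp

namespace MvPowerSeries

variable {σ R : Type*} [CommSemiring R]

def toAxis (s : σ) : MvPowerSeries σ R →+* PowerSeries R where
  toFun f := PowerSeries.mk fun n => coeff (Finsupp.single s n) f
  map_one' := by
    classical
    ext n
    simp [coeff_one, PowerSeries.coeff_one]
  map_mul' f g := by
    classical
    ext n
    rw [PowerSeries.coeff_mk, PowerSeries.coeff_mul, coeff_mul, Finsupp.antidiagonal_single,
      Finset.sum_map]
    simp
  map_zero' := by ext; simp
  map_add' f g := by ext; simp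

@[simp]
theorem coeff_toAxis (s : σ) (f : MvPowerSeries σ R) (n : ℕ) :
    PowerSeries.coeff n (toAxis s f) = coeff (Finsupp.single s n) f :=
  PowerSeries.coeff_mk n fun m => coeff (Finsupp.single s m) f

@[simp]
theorem constantCoeff_toAxis (s : σ) (f : MvPowerSeries σ R) :
    PowerSeries.constantCoeff (toAxis s f) = constantCoeff f := by
  rw [← PowerSeries.coeff_zero_eq_constantCoeff_apply, coeff_toAxis, Finsupp.single_zero,
    coeff_zero_eq_constantCoeff_apply]

@[simp]
theorem toAxis_X_self (s : σ) : toAxis s (X s : MvPowerSeries σ R) = PowerSeries.X := by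
  classical
  ext n
  simp [coeff_X, PowerSeries.coeff_X, (Finsupp.single_injective s).eq_iff]

theorem toAxis_X_of_ne {s t : σ} (h : s ≠ t) : toAxis s (X t : MvPowerSeries σ R) = 0 := by
  classical
  ext n
  rw [coeff_toAxis, coeff_X, if_neg, map_zero]
  intro hn
  simpa [h] using DFunLike.congr_fun hn t


theorem X_dvd_of_toAxis_eq_zero {s t : Fin 2} (hst : s ≠ t) {f : MvPowerSeries (Fin 2) R}
    (hf : toAxis t f = 0) : X s ∣ f :=
  X_dvd_iff.2 fun m hm => by
    rw [Finsupp.eq_single_of_apply_eq_zero hst hm, ← coeff_toAxis, hf, map_zero]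

theorem X_zero_mul_X_one_dvd {f : MvPowerSeries (Fin 2) R} (h₀ : toAxis 0 f = 0)
    (h₁ : toAxis 1 f = 0) : X 0 * X 1 ∣ f := by
  obtain ⟨g, rfl⟩ := X_dvd_of_toAxis_eq_zero zero_ne_one h₁
  rw [map_mul, toAxis_X_self, ← mul_zero PowerSeries.X] at h₀
  exact mul_dvd_mul_left _ (X_dvd_of_toAxis_eq_zero one_ne_zero (PowerSeries.X_mul_cancel h₀))

theorem exists_toAxis_eq {p q : PowerSeries R}
    (h : PowerSeries.constantCoeff p = PowerSeries.constantCoeff q) :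
    ∃ f : MvPowerSeries (Fin 2) R, toAxis 0 f = p ∧ toAxis 1 f = q := by
  -- the coefficients off the two axes are irrelevant
  let f : MvPowerSeries (Fin 2) R := fun d =>
    if d 1 = 0 then PowerSeries.coeff (d 0) p else PowerSeries.coeff (d 1) q
  refine ⟨f, ?_, ?_⟩ <;> ext n <;> rw [coeff_toAxis, coeff_apply]
  · simp [f]
  · rcases eq_or_ne n 0 with rfl | hn
    · simpa [f] using h
    · simp [f, hn]

end MvPowerSeries

abbrev NodeRing (R : Type*) [CommRing R] :=
  MvPowerSeries (Fin 2) R ⧸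
    Ideal.span {(MvPowerSeries.X 0 : MvPowerSeries (Fin 2) R) * MvPowerSeries.X 1}

namespace NodeRing

open MvPowerSeries (toAxis)
open PowerSeries (X constantCoeff)

section

variable {R : Type*} [CommRing R]

-- the paper's `u₁, u₂` are `u 0, u 1`
def u (s : Fin 2) : NodeRing R := Ideal.Quotient.mk _ (MvPowerSeries.X s)

def branch (s : Fin 2) : NodeRing R →+* PowerSeries R :=
  Ideal.Quotient.lift _ (toAxis s) fun f hf => by
    obtain ⟨g, rfl⟩ := Ideal.mem_span_singleton'.1 hf
    fin_cases s <;> simp [MvPowerSeries.toAxis_X_of_ne]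

@[simp]
theorem branch_mk (s : Fin 2) (f : MvPowerSeries (Fin 2) R) :
    branch s (Ideal.Quotient.mk _ f) = toAxis s f :=
  Ideal.Quotient.lift_mk _ _ _

@[simp]
theorem branch_u_self (s : Fin 2) : branch s (u s : NodeRing R) = X := by
  simp [u]

theorem branch_u_pow_of_ne {s t : Fin 2} (hst : s ≠ t) {a : ℕ} (ha : a ≠ 0) :
    branch s (u t ^ a : NodeRing R) = 0 := by
  simp [u, MvPowerSeries.toAxis_X_of_ne hst, ha]

theorem constantCoeff_branch (s t : Fin 2) (z : NodeRing R) :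
    constantCoeff (branch s z) = constantCoeff (branch t z) := by
  obtain ⟨f, rfl⟩ := Ideal.Quotient.mk_surjective z
  simp

theorem eq_of_branch_eq {s t : Fin 2} (hst : s ≠ t) {z w : NodeRing R}
    (hs : branch s z = branch s w) (ht : branch t z = branch t w) : z = w := by
  have h : ∀ v, branch v (z - w) = 0 := fun v => by
    obtain rfl | rfl : v = s ∨ v = t := by omega
    exacts [by rw [map_sub, hs, sub_self], by rw [map_sub, ht, sub_self]]
  obtain ⟨f, hf⟩ := Ideal.Quotient.mk_surjective (z - w)
  rw [← sub_eq_zero, ← hf, Ideal.Quotient.eq_zero_iff_mem, Ideal.mem_span_singleton]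
  exact MvPowerSeries.X_zero_mul_X_one_dvd (by rw [← branch_mk, hf, h])
    (by rw [← branch_mk, hf, h])

theorem exists_branch_eq {s t : Fin 2} (hst : s ≠ t) {p q : PowerSeries R}
    (h : constantCoeff p = constantCoeff q) :
    ∃ z : NodeRing R, branch s z = p ∧ branch t z = q := by
  fin_cases s <;> fin_cases t <;> simp only [ne_eq, not_true_eq_false] at hst
  · obtain ⟨f, h₀, h₁⟩ := MvPowerSeries.exists_toAxis_eq h
    exact ⟨Ideal.Quotient.mk _ f, by simpa using h₀, by simpa using h₁⟩
  · obtain ⟨f, h₀, h₁⟩ := MvPowerSeries.exists_toAxis_eq h.symm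
    exact ⟨Ideal.Quotient.mk _ f, by simpa using h₁, by simpa using h₀⟩

theorem branch_surjective (s : Fin 2) : Function.Surjective (branch s : NodeRing R →+* _) := by
  intro p
  obtain ⟨t, hst⟩ : ∃ t : Fin 2, s ≠ t := ⟨s + 1, by omega⟩
  obtain ⟨z, hz, -⟩ := exists_branch_eq hst (PowerSeries.constantCoeff_C (constantCoeff p)).symm
  exact ⟨z, hz⟩

theorem dvd_of_branch_eq_mul {s t : Fin 2} (hst : s ≠ t) {z w : NodeRing R} {p q : PowerSeries R}
    (hpq : constantCoeff p = constantCoeff q) (hs : branch s w = p * branch s z)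
    (ht : branch t w = q * branch t z) : z ∣ w := by
  obtain ⟨c, hcs, hct⟩ := exists_branch_eq hst hpq
  exact ⟨c, eq_of_branch_eq hst (by rw [hs, map_mul, hcs, mul_comm])
    (by rw [ht, map_mul, hct, mul_comm])⟩

end

section

variable {k : Type*} [Field k] {I : Ideal (NodeRing k)}

theorem isUnit_of_constantCoeff_branch_ne_zero {z : NodeRing k}
    (h : constantCoeff (branch 0 z) ≠ 0) : IsUnit z := by
  have h' : constantCoeff (branch 1 z) ≠ 0 := by rwa [← constantCoeff_branch 0 1]
  refine isUnit_iff_dvd_one.2 <| dvd_of_branch_eq_mul zero_ne_one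
    (p := (branch 0 z)⁻¹) (q := (branch 1 z)⁻¹) ?_ ?_ ?_
  · rw [PowerSeries.constantCoeff_inv, PowerSeries.constantCoeff_inv, constantCoeff_branch 0 1]
  · rw [map_one, PowerSeries.inv_mul_cancel _ h]
  · rw [map_one, PowerSeries.inv_mul_cancel _ h']

theorem constantCoeff_branch_eq_zero_of_mem (hI : I ≠ ⊤) {z : NodeRing k} (hz : z ∈ I)
    (s : Fin 2) : constantCoeff (branch s z) = 0 := by
  rw [constantCoeff_branch s 0]
  by_contra h
  exact hI (I.eq_top_of_isUnit_mem hz (isUnit_of_constantCoeff_branch_ne_zero h))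

theorem exists_eq_span_singleton_of_branch_eq_zero {s t : Fin 2} (hst : s ≠ t)
    (ht : ∀ z ∈ I, branch t z = 0) : ∃ f, I = Ideal.span {f} := by
  set J := I.map (branch s)
  obtain ⟨z, hz, hzJ⟩ := (Ideal.mem_map_iff_of_surjective _ (branch_surjective (R := k) s)).1
    (Submodule.IsPrincipal.generator_mem J)
  refine ⟨z, le_antisymm (fun w hw => Ideal.mem_span_singleton.2 ?_)
    ((Ideal.span_singleton_le_iff_mem _).2 hz)⟩
  obtain ⟨r, hr⟩ := (Submodule.IsPrincipal.mem_iff_generator_dvd J).1 (Ideal.mem_map_of_mem _ hw)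
  refine dvd_of_branch_eq_mul hst (p := r) (q := PowerSeries.C (constantCoeff r)) (by simp)
    (by rw [hr, hzJ, mul_comm]) ?_
  rw [ht w hw, ht z hz, mul_zero]

theorem exists_branch_eq_X_pow (hI : I ≠ ⊤) {s : Fin 2} (hs : ∃ z ∈ I, branch s z ≠ 0) :
    ∃ a, 0 < a ∧ (∃ z ∈ I, branch s z = X ^ a) ∧ ∀ w ∈ I, X ^ a ∣ branch s w := by
  replace hs : I.map (branch s) ≠ ⊥ := by
    simpa [Ideal.map_eq_bot_iff_le_ker, SetLike.not_le_iff_exists] using hs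
  obtain ⟨a, ha⟩ :=
    IsDiscreteValuationRing.ideal_eq_span_pow_irreducible hs PowerSeries.X_irreducible
  obtain ⟨z, hz, hzX⟩ := (Ideal.mem_map_iff_of_surjective _ (branch_surjective (R := k) s)).1
    (ha ▸ Ideal.mem_span_singleton_self _)
  refine ⟨a, Nat.pos_of_ne_zero fun ha₀ => ?_, ⟨z, hz, hzX⟩, fun w hw => ?_⟩
  · simpa [hzX, ha₀] using constantCoeff_branch_eq_zero_of_mem hI hz s
  · rw [← Ideal.mem_span_singleton, ← ha]
    exact Ideal.mem_map_of_mem _ hw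

theorem u_pow_mem_of_branch_eq_zero {s t : Fin 2} (hst : s ≠ t) {a : ℕ} (ha : a ≠ 0)
    {w : NodeRing k} (hw : w ∈ I) (ht : branch t w = 0) {e : PowerSeries k}
    (hs : branch s w = X ^ a * e) (he : constantCoeff e ≠ 0) : u s ^ a ∈ I := by
  refine I.mem_of_dvd (dvd_of_branch_eq_mul hst (p := e⁻¹) (q := e⁻¹) rfl ?_ ?_) hw
  · rw [map_pow, branch_u_self, hs, mul_left_comm, PowerSeries.inv_mul_cancel _ he, mul_one]
  · rw [branch_u_pow_of_ne hst.symm ha, ht, mul_zero]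

theorem eq_span_pair {a b : ℕ} (ha : a ≠ 0) (hb : b ≠ 0) (hu₀ : u 0 ^ a ∈ I)
    (hu₁ : u 1 ^ b ∈ I) (hdvd₀ : ∀ w ∈ I, X ^ a ∣ branch 0 w)
    (hdvd₁ : ∀ w ∈ I, X ^ b ∣ branch 1 w) :
    I = Ideal.span ({u 0 ^ a, u 1 ^ b} : Set (NodeRing k)) := by
  refine le_antisymm (fun w hw => ?_)
    (Ideal.span_le.2 (by simp [Set.insert_subset_iff, hu₀, hu₁]))
  obtain ⟨r, hr⟩ := hdvd₀ w hw
  obtain ⟨q, hq⟩ := hdvd₁ w hw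
  obtain ⟨r', rfl⟩ := branch_surjective 0 r
  obtain ⟨q', rfl⟩ := branch_surjective 1 q
  refine Ideal.mem_span_pair.2 ⟨r', q', eq_of_branch_eq zero_ne_one ?_ ?_⟩
  · simp [branch_u_pow_of_ne zero_ne_one hb, hr, mul_comm]
  · simp [branch_u_pow_of_ne one_ne_zero ha, hq, mul_comm]

section

variable {a b : ℕ} {z₀ : NodeRing k} (hz₀ : z₀ ∈ I) (hz₀X : branch 0 z₀ = X ^ a)
include hz₀ hz₀X

theorem u_zero_pow_mem_of_u_one_pow_mem (ha : a ≠ 0) (hb : b ≠ 0) (hz₀b : X ^ b ∣ branch 1 z₀)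
    (hu₁ : u 1 ^ b ∈ I) : u 0 ^ a ∈ I := by
  obtain ⟨c, hc⟩ := hz₀b
  obtain ⟨c', rfl⟩ := branch_surjective 1 c
  refine u_pow_mem_of_branch_eq_zero zero_ne_one ha (I.sub_mem hz₀ (I.mul_mem_left c' hu₁)) ?_
    (e := 1) ?_ (by simp)
  · rw [map_sub, map_mul, map_pow, branch_u_self, hc, mul_comm, sub_self]
  · rw [map_sub, map_mul, branch_u_pow_of_ne zero_ne_one hb, mul_zero, sub_zero, hz₀X, mul_one]

theorem constantCoeff_cofactor_eq (hb : b ≠ 0) (hu₁ : u 1 ^ b ∉ I) {c : PowerSeries k}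
    (hc : branch 1 z₀ = X ^ b * c) {w : NodeRing k} (hw : w ∈ I) {r q : PowerSeries k}
    (hr : branch 0 w = X ^ a * r) (hq : branch 1 w = X ^ b * q) :
    constantCoeff q = constantCoeff r * constantCoeff c := by
  obtain ⟨r', rfl⟩ := branch_surjective 0 r
  by_contra hne
  refine hu₁ (u_pow_mem_of_branch_eq_zero one_ne_zero hb (I.sub_mem hw (I.mul_mem_left r' hz₀))
    ?_ (e := q - branch 1 r' * c) ?_ ?_)
  · rw [map_sub, map_mul, hr, hz₀X, mul_comm, sub_self]
  · rw [map_sub, map_mul, hq, hc]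
    ring
  · rwa [map_sub, map_mul, constantCoeff_branch 1 0, sub_ne_zero]

theorem eq_span_singleton_of_u_one_pow_not_mem (hb : b ≠ 0) (hu₁ : u 1 ^ b ∉ I)
    (hdvd₀ : ∀ w ∈ I, X ^ a ∣ branch 0 w) (hdvd₁ : ∀ w ∈ I, X ^ b ∣ branch 1 w)
    (hz₁ : ∃ z₁ ∈ I, branch 1 z₁ = X ^ b) : I = Ideal.span {z₀} := by
  obtain ⟨c, hc⟩ := hdvd₁ z₀ hz₀
  have hc₀ : constantCoeff c ≠ 0 := by
    obtain ⟨z₁, hz₁, hz₁X⟩ := hz₁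
    obtain ⟨r, hr⟩ := hdvd₀ z₁ hz₁
    have := constantCoeff_cofactor_eq hz₀ hz₀X hb hu₁ hc hz₁ hr (q := 1) (by rw [hz₁X, mul_one])
    exact right_ne_zero_of_mul_eq_one (by rw [← this, map_one])
  refine le_antisymm (fun w hw => Ideal.mem_span_singleton.2 ?_)
    ((Ideal.span_singleton_le_iff_mem _).2 hz₀)
  obtain ⟨r, hr⟩ := hdvd₀ w hw
  obtain ⟨q, hq⟩ := hdvd₁ w hw
  refine dvd_of_branch_eq_mul zero_ne_one (p := r) (q := q * c⁻¹) ?_ ?_ ?_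
  · rw [map_mul, PowerSeries.constantCoeff_inv,
      constantCoeff_cofactor_eq hz₀ hz₀X hb hu₁ hc hw hr hq, mul_inv_cancel_right₀ hc₀]
  · rw [hr, hz₀X, mul_comm]
  · rw [hq, hc]
    linear_combination -(X ^ b * q) * PowerSeries.inv_mul_cancel c hc₀

end

end

end NodeRing

end

/-- Every ideal of `k[[u₁,u₂]]/(u₁u₂)` (the completed local ring of the node) is either
principal or of the form `(u₁^{a₁}, u₂^{a₂})` with `a₁, a₂ > 0`. -/
theorem ideal_of_node_ring_principal_or_two_generated
    (k : Type) [Field k]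
    (I : Ideal (MvPowerSeries (Fin 2) k ⧸
        Ideal.span {(MvPowerSeries.X 0 : MvPowerSeries (Fin 2) k) * MvPowerSeries.X 1})) :
    (∃ f, I = Ideal.span {f}) ∨
      ∃ a₁ a₂ : ℕ, 0 < a₁ ∧ 0 < a₂ ∧
        I = Ideal.span
            {(Ideal.Quotient.mk _ (MvPowerSeries.X 0 : MvPowerSeries (Fin 2) k)) ^ a₁,
             (Ideal.Quotient.mk _ (MvPowerSeries.X 1 : MvPowerSeries (Fin 2) k)) ^ a₂} := by
  open NodeRing in
  by_cases hI : I = ⊤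
  · exact Or.inl ⟨1, by rw [hI, Ideal.span_singleton_one]⟩
  by_cases h₀ : ∀ z ∈ I, branch 0 z = 0
  · exact Or.inl (exists_eq_span_singleton_of_branch_eq_zero one_ne_zero h₀)
  by_cases h₁ : ∀ z ∈ I, branch 1 z = 0
  · exact Or.inl (exists_eq_span_singleton_of_branch_eq_zero zero_ne_one h₁)
  push Not at h₀ h₁
  obtain ⟨a, ha, ⟨z₀, hz₀, hz₀X⟩, hdvd₀⟩ := exists_branch_eq_X_pow hI h₀
  obtain ⟨b, hb, hz₁, hdvd₁⟩ := exists_branch_eq_X_pow hI h₁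
  by_cases hu₁ : u 1 ^ b ∈ I
  · have hu₀ := u_zero_pow_mem_of_u_one_pow_mem hz₀ hz₀X ha.ne' hb.ne' (hdvd₁ z₀ hz₀) hu₁
    exact Or.inr ⟨a, b, ha, hb, eq_span_pair ha.ne' hb.ne' hu₀ hu₁ hdvd₀ hdvd₁⟩
  · exact Or.inl ⟨z₀, eq_span_singleton_of_u_one_pow_not_mem hz₀ hz₀X hb.ne' hu₁ hdvd₀ hdvd₁ hz₁⟩
end

section
/- Let X be a smooth variety and D1, D2 ⊂ X smooth divisors intersecting transversally. If a coherent sheaf F on X is normal to D1 and normal to D2 (i.e., Tor_1^{O_X}(F, O_{D1}) = 0 and Tor_1^{O_X}(F, O_{D2}) = 0), then F is normal to the union D1 ∪ D2 (i.e., Tor_1^{O_X}(F, O_{D1 ∪ D2}) = 0, where D1 ∪ D2 is the divisor defined by the product of local equations). -/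
/-!
For a nonzerodivisor `f`, the complex `0 → R --f--> R → 0` is a free resolution of `R/(f)`;
tensoring it with `F` shows that `Tor₁(F, R/(f))` is the `f`-torsion of `F`. So `F` is normal to
`(f = 0)` exactly when `f` is `F`-regular, and a product of `F`-regular elements is `F`-regular.
-/

open CategoryTheory CategoryTheory.Limits

universe u

variable {R : Type u} [CommRing R]

noncomputable def koszulComplexX (R : Type u) [CommRing R] : ℕ → ModuleCat R
  | 0 | 1 => ModuleCat.of R R
  | _ + 2 => ModuleCat.of R PUnit

noncomputable def koszulComplexD (f : R) :
    ∀ n : ℕ, koszulComplexX R (n + 1) ⟶ koszulComplexX R n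
  | 0 => f • 𝟙 (ModuleCat.of R R)
  | _ + 1 => 0

noncomputable def koszulComplex (f : R) : ChainComplex (ModuleCat R) ℕ :=
  ChainComplex.of (koszulComplexX R) (koszulComplexD f) (by rintro (_ | _) <;> exact zero_comp)

lemma koszulComplex_d_one_zero (f : R) :
    (koszulComplex f).d 1 0 = f • 𝟙 ((koszulComplex f).X 1) :=
  ChainComplex.of_d (koszulComplexX R) (koszulComplexD f) 0

lemma koszulComplex_d_two_one (f : R) : (koszulComplex f).d 2 1 = 0 :=
  ChainComplex.of_d (koszulComplexX R) (koszulComplexD f) 1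

lemma koszulComplex_exactAt_one {f : R} (hf : f ∈ nonZeroDivisors R) :
    (koszulComplex f).ExactAt 1 := by
  rw [HomologicalComplex.exactAt_iff' _ 2 1 0 (by simp) (by simp),
    ShortComplex.exact_iff_mono _ (koszulComplex_d_two_one f), ModuleCat.mono_iff_injective]
  exact (isRegular_iff_mem_nonZeroDivisors.2 hf).left

lemma koszulComplex_exactAt_add_two (f : R) (n : ℕ) : (koszulComplex f).ExactAt (n + 2) := by
  rw [HomologicalComplex.exactAt_iff' _ (n + 3) (n + 2) (n + 1) (by simp) (by simp)]
  exact ShortComplex.exact_of_isZero_X₂ _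
    (ModuleCat.isZero_of_subsingleton (ModuleCat.of R PUnit))

lemma koszulComplex_d_comp_mkQ (f : R) :
    (koszulComplex f).d 1 0 ≫ ModuleCat.ofHom (Ideal.span {f}).mkQ = 0 := by
  rw [koszulComplex_d_one_zero]
  ext
  change Submodule.Quotient.mk (f • (1 : R)) = (0 : R ⧸ Ideal.span {f})
  rw [Submodule.Quotient.mk_eq_zero, smul_eq_mul, mul_one]
  exact Ideal.mem_span_singleton_self f

noncomputable def koszulAugmentation (f : R) :
    koszulComplex f ⟶ (ChainComplex.single₀ _).obj (ModuleCat.of R (R ⧸ Ideal.span {f})) :=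
  (ChainComplex.toSingle₀Equiv _ _).symm
    ⟨ModuleCat.ofHom (Ideal.span {f}).mkQ, koszulComplex_d_comp_mkQ f⟩

lemma quasiIsoAt_koszulAugmentation_zero (f : R) : QuasiIsoAt (koszulAugmentation f) 0 := by
  rw [ChainComplex.quasiIsoAt₀_iff, ShortComplex.quasiIso_iff_of_zeros' _ rfl rfl rfl]
  constructor
  · rw [ShortComplex.moduleCat_exact_iff]
    intro (x : R) (hx : Submodule.Quotient.mk x = (0 : R ⧸ Ideal.span {f}))
    obtain ⟨y, rfl⟩ := Ideal.mem_span_singleton.1 ((Submodule.Quotient.mk_eq_zero _).1 hx)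
    exact ⟨y, rfl⟩
  · rw [ModuleCat.epi_iff_surjective]
    exact Submodule.mkQ_surjective _

lemma quasiIso_koszulAugmentation {f : R} (hf : f ∈ nonZeroDivisors R) :
    QuasiIso (koszulAugmentation f) where
  quasiIsoAt
    | 0 => quasiIsoAt_koszulAugmentation_zero f
    | n + 1 => by
      rw [quasiIsoAt_iff_exactAt' (hL := ChainComplex.exactAt_succ_single_obj ..)]
      cases n with
      | zero => exact koszulComplex_exactAt_one hf
      | succ n => exact koszulComplex_exactAt_add_two f n

noncomputable def koszulResolution {f : R} (hf : f ∈ nonZeroDivisors R) :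
    ProjectiveResolution (ModuleCat.of R (R ⧸ Ideal.span {f})) where
  complex := koszulComplex f
  projective
    | 0 | 1 => inferInstanceAs (Projective (ModuleCat.of R R))
    | _ + 2 => (ModuleCat.isZero_of_subsingleton (ModuleCat.of R PUnit)).projective
  π := koszulAugmentation f
  quasiIso := quasiIso_koszulAugmentation hf

open MonoidalCategory in
lemma isZero_Tor_one_quotient_span_singleton_iff (F : Type u) [AddCommGroup F] [Module R F]
    {f : R} (hf : f ∈ nonZeroDivisors R) :
    IsZero (((Tor (ModuleCat R) 1).obj (ModuleCat.of R F)).obj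
      (ModuleCat.of R (R ⧸ Ideal.span {f}))) ↔ IsSMulRegular F f := by
  let G := (tensoringLeft (ModuleCat R)).obj (ModuleCat.of R F)
  have hd₁₀ : G.map ((koszulComplex f).d 1 0) = f • 𝟙 _ :=
    (congrArg G.map (koszulComplex_d_one_zero f)).trans
      ((G.map_smul f (𝟙 _)).trans (by rw [G.map_id]; rfl))
  have hd₂₁ : G.map ((koszulComplex f).d 2 1) = 0 := by
    rw [koszulComplex_d_two_one, G.map_zero]
  refine ((koszulResolution hf).isoLeftDerivedObj G 1).isZero_iff.trans ?_
  change IsZero (((G.mapHomologicalComplex _).obj (koszulComplex f)).homology 1) ↔ _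
  rw [← HomologicalComplex.exactAt_iff_isZero_homology,
    HomologicalComplex.exactAt_iff' _ 2 1 0 (by simp) (by simp),
    ShortComplex.exact_iff_mono _ hd₂₁, ModuleCat.mono_iff_injective]
  change Function.Injective (G.map ((koszulComplex f).d 1 0)).hom ↔ _
  rw [hd₁₀]
  exact (TensorProduct.rid R F).isSMulRegular_congr f

theorem normal_to_union_of_normal_to_each_general
    (R : Type) [CommRing R]
    (f₁ f₂ : R) (hf₁ : f₁ ∈ nonZeroDivisors R) (hf₂ : f₂ ∈ nonZeroDivisors R)
    (F : Type) [AddCommGroup F] [Module R F]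
    (h₁ : CategoryTheory.Limits.IsZero
      (((Tor (ModuleCat R) 1).obj (ModuleCat.of R F)).obj
        (ModuleCat.of R (R ⧸ Ideal.span {f₁}))))
    (h₂ : CategoryTheory.Limits.IsZero
      (((Tor (ModuleCat R) 1).obj (ModuleCat.of R F)).obj
        (ModuleCat.of R (R ⧸ Ideal.span {f₂})))) :
    CategoryTheory.Limits.IsZero
      (((Tor (ModuleCat R) 1).obj (ModuleCat.of R F)).obj
        (ModuleCat.of R (R ⧸ Ideal.span {f₁ * f₂}))) := by
  rw [isZero_Tor_one_quotient_span_singleton_iff F hf₁] at h₁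
  rw [isZero_Tor_one_quotient_span_singleton_iff F hf₂] at h₂
  exact (isZero_Tor_one_quotient_span_singleton_iff F (mul_mem hf₁ hf₂)).2 (h₁.mul h₂)

/-- (Lemma 2.9 of Section 3 of the paper, local model.)  On a smooth variety `X`, two
smooth divisors `D₁ = (f₁ = 0)` and `D₂ = (f₂ = 0)` intersecting transversally are locally
cut out by regular elements `f₁, f₂` of the coordinate ring `X`, and `D₁ ∪ D₂ = (f₁f₂ = 0)`.
If a coherent sheaf `F` is normal to `D₁` and to `D₂`, i.e.
`Tor₁(F, R/(f₁)) = 0` and `Tor₁(F, R/(f₂)) = 0`, then `F` is normal to the union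
`D₁ ∪ D₂`, i.e. `Tor₁(F, R/(f₁f₂)) = 0`. -/
theorem normal_to_union_of_normal_to_each
    (R : Type) [CommRing R] [IsNoetherianRing R]
    (f₁ f₂ : R) (hf₁ : f₁ ∈ nonZeroDivisors R) (hf₂ : f₂ ∈ nonZeroDivisors R)
    (F : Type) [AddCommGroup F] [Module R F]
    (h₁ : CategoryTheory.Limits.IsZero
      (((Tor (ModuleCat R) 1).obj (ModuleCat.of R F)).obj
        (ModuleCat.of R (R ⧸ Ideal.span {f₁}))))
    (h₂ : CategoryTheory.Limits.IsZero
      (((Tor (ModuleCat R) 1).obj (ModuleCat.of R F)).obj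
        (ModuleCat.of R (R ⧸ Ideal.span {f₂})))) :
    CategoryTheory.Limits.IsZero
      (((Tor (ModuleCat R) 1).obj (ModuleCat.of R F)).obj
        (ModuleCat.of R (R ⧸ Ideal.span {f₁ * f₂}))) :=
  normal_to_union_of_normal_to_each_general R f₁ f₂ hf₁ hf₂ F h₁ h₂
end

section
/- Let A = B[z1, z2, t]/(z1 z2) where B is an integral k-algebra of finite type, with Gm-action z1 ↦ σ^a z1, z2 ↦ z2, t ↦ σ^b t for fixed integers a > 0 and b < 0. Let R = A^{⊕m}, let φ: R → M be a Gm-equivariant quotient A-module with M flat over k[t], let I = (z1, z2) ⊂ A, A_0 = A/(t), I_0 = (z1,z2) ⊂ A_0, M_0 = M ⊗_A A_0, and let M_I (resp. (M_0)_{I_0}) denote the submodule of elements annihilated by some power of I (resp. I_0). Then the natural homomorphism M_I ⊗_A A_0 → (M_0)_{I_0} is an isomorphism. -/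
/-!
Every generator of `M` has weight `0` and `A` is spanned over `B` by the monomials
`z₁ⁱ z₂ʲ tᵏ` of weight `i a + k b`, so a homogeneous element of negative weight is divisible by
`t`, and one of weight `> n a` is divisible by `z₁ⁿ⁺¹`. Let `x` be homogeneous of weight `ℓ ≥ 0`
with `z₁ⁿ x, z₂ⁿ x ∈ t M`. Comparing weights gives `z₁ⁿ x = t z₁ⁿ⁺¹ w` and `z₂ⁿ x = t z₁ w'`,
and since `z₁ z₂ = 0` the element `x - t z₁ w` is killed by `z₁ⁿ⁺¹` and `z₂ⁿ⁺¹`. As `t M` is a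
graded submodule, this lifts every `I`-power-torsion class of `M/tM` to `M_I`. Injectivity of
`M_I/tM_I → M/tM` is the `t`-regularity of `M`, which is flatness over `k[t]`.
-/

open DirectSum

section PowTorsion

variable {A M N : Type*} [CommRing A] [AddCommGroup M] [Module A M] [AddCommGroup N] [Module A N]

def powTorsion (I : Ideal A) (M : Type*) [AddCommGroup M] [Module A M] : Submodule A M :=
  ⨆ n : ℕ, Submodule.torsionBySet A M (I ^ n : Ideal A)

variable {I : Ideal A}

lemma mem_powTorsion_iff {x : M} : x ∈ powTorsion I M ↔ ∃ n, ∀ r ∈ I ^ n, r • x = 0 := by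
  have hmono : Monotone fun n : ℕ => Submodule.torsionBySet A M (I ^ n : Ideal A) :=
    fun _ _ h => Submodule.torsionBySet_le_torsionBySet_of_subset (Ideal.pow_le_pow_right h)
  simp only [powTorsion, Submodule.mem_iSup_of_directed _ hmono.directed_le,
    Submodule.mem_torsionBySet_iff, Subtype.forall, SetLike.mem_coe]

lemma map_mem_powTorsion (f : M →ₗ[A] N) {x : M} (hx : x ∈ powTorsion I M) :
    f x ∈ powTorsion I N := by
  obtain ⟨n, hn⟩ := mem_powTorsion_iff.mp hx
  exact mem_powTorsion_iff.mpr ⟨n, fun r hr => by rw [← map_smul, hn r hr, map_zero]⟩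

lemma exists_pow_smul_eq_zero_of_mem_powTorsion {x : M} (hx : x ∈ powTorsion I M) :
    ∃ n, ∀ r ∈ I, r ^ n • x = 0 := by
  obtain ⟨n, hn⟩ := mem_powTorsion_iff.mp hx
  exact ⟨n, fun r hr => hn _ (Ideal.pow_mem_pow hr n)⟩

lemma mem_powTorsion_of_smul_mem {t : A} (ht : IsSMulRegular M t) {y : M}
    (h : t • y ∈ powTorsion I M) : y ∈ powTorsion I M := by
  obtain ⟨n, hn⟩ := mem_powTorsion_iff.mp h
  refine mem_powTorsion_iff.mpr ⟨n, fun r hr => ht ?_⟩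
  change t • r • y = t • 0
  rw [smul_comm, hn r hr, smul_zero]

lemma mem_powTorsion_span_pair {z₁ z₂ : A} {c : ℕ} {x : M} (h₁ : z₁ ^ c • x = 0)
    (h₂ : z₂ ^ c • x = 0) : x ∈ powTorsion (Ideal.span {z₁, z₂}) M := by
  refine mem_powTorsion_iff.mpr ⟨c + c, fun r hr => ?_⟩
  rw [Ideal.span_insert] at hr
  have hr' := Ideal.sup_pow_add_le_pow_sup_pow hr
  rw [Ideal.span_singleton_pow, Ideal.span_singleton_pow] at hr'
  obtain ⟨r₁, hr₁, r₂, hr₂, rfl⟩ := Submodule.mem_sup.mp hr'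
  obtain ⟨d₁, rfl⟩ := Ideal.mem_span_singleton'.mp hr₁
  obtain ⟨d₂, rfl⟩ := Ideal.mem_span_singleton'.mp hr₂
  rw [add_smul, mul_smul, mul_smul, h₁, h₂, smul_zero, smul_zero, add_zero]

end PowTorsion

section ReductionModT

variable {A M : Type*} [CommRing A] [AddCommGroup M] [Module A M]

lemma mem_span_singleton_smul_top_iff {t : A} {x : M} :
    x ∈ Ideal.span {t} • (⊤ : Submodule A M) ↔ ∃ y, t • y = x := by
  simp [Submodule.ideal_span_singleton_smul, Submodule.mem_smul_pointwise_iff_exists]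

lemma ker_mkQ_comp_subtype_of_smul_mem {t : A} (P : Submodule A M)
    (hP : ∀ y, t • y ∈ P → y ∈ P) :
    LinearMap.ker ((Ideal.span {t} • (⊤ : Submodule A M)).mkQ ∘ₗ P.subtype) =
      Ideal.span {t} • ⊤ := by
  ext x
  simp only [LinearMap.mem_ker, LinearMap.comp_apply, Submodule.subtype_apply,
    Submodule.mkQ_apply, Submodule.Quotient.mk_eq_zero, mem_span_singleton_smul_top_iff]
  constructor
  · rintro ⟨y, hy⟩
    exact ⟨⟨y, hP y (hy ▸ x.2)⟩, Subtype.ext hy⟩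
  · rintro ⟨y, rfl⟩
    exact ⟨y, rfl⟩

lemma mkQ_mem_range_mkQ_comp_subtype {P T : Submodule A M} {x : M} (hx : x ∈ P ⊔ T) :
    T.mkQ x ∈ LinearMap.range (T.mkQ ∘ₗ P.subtype) := by
  obtain ⟨y, hy, z, hz, rfl⟩ := Submodule.mem_sup.mp hx
  refine ⟨⟨y, hy⟩, ?_⟩
  simp [(Submodule.Quotient.mk_eq_zero T).mpr hz]

end ReductionModT

section Weights

variable {B M A : Type*} [Semiring B] [AddCommMonoid M] [Module B M]

def ActsWithWeight [SMul A M] (Mgr : ℤ → Submodule B M) (c : A) (d : ℤ) : Prop :=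
  ∀ l, ∀ x ∈ Mgr l, c • x ∈ Mgr (l + d)

namespace ActsWithWeight

variable {Mgr : ℤ → Submodule B M}

section MulAction

variable [Monoid A] [MulAction A M] {c c' : A} {d d' : ℤ}

lemma one : ActsWithWeight Mgr (1 : A) 0 := fun l x hx => by simpa using hx

lemma mul (hc : ActsWithWeight Mgr c d) (hc' : ActsWithWeight Mgr c' d') :
    ActsWithWeight Mgr (c * c') (d + d') := fun l x hx => by
  rw [mul_smul, add_comm d, ← add_assoc]
  exact hc _ _ (hc' l x hx)

lemma pow (hc : ActsWithWeight Mgr c d) (n : ℕ) : ActsWithWeight Mgr (c ^ n) (n * d) := by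
  induction n with
  | zero => simpa using one
  | succ n ih => simpa [pow_succ, add_mul] using ih.mul hc

end MulAction

variable [Monoid A] [DistribMulAction A M] [Decomposition Mgr] {c c' : A} {d d' : ℤ}

lemma decompose_smul (hc : ActsWithWeight Mgr c d) (x : M) (ℓ : ℤ) :
    (decompose Mgr (c • x) ℓ : M) = c • (decompose Mgr x (ℓ - d) : M) := by
  induction x using DirectSum.Decomposition.inductionOn Mgr with
  | zero => simp
  | @homogeneous i y =>
    have hcy := hc i y y.2
    by_cases h : i = ℓ - d
    · subst h
      rw [sub_add_cancel] at hcy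
      rw [decompose_of_mem_same Mgr hcy, decompose_of_mem_same Mgr y.2]
    · rw [decompose_of_mem_ne Mgr hcy (by omega), decompose_of_mem_ne Mgr y.2 h, smul_zero]
  | add y z hy hz =>
    simp only [smul_add, decompose_add, DirectSum.add_apply, Submodule.coe_add, hy, hz]

lemma exists_smul_eq_of_mem (hc : ActsWithWeight Mgr c d) {y : M} {ℓ : ℤ} (hy : y ∈ Mgr ℓ)
    (h : ∃ u, c • u = y) : ∃ u ∈ Mgr (ℓ - d), c • u = y := by
  obtain ⟨u, rfl⟩ := h
  exact ⟨_, SetLike.coe_mem _, by rw [← hc.decompose_smul, decompose_of_mem_same Mgr hy]⟩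

lemma exists_smul_eq_smul_decompose (hc : ActsWithWeight Mgr c d)
    (hc' : ActsWithWeight Mgr c' d') {x : M} (h : ∃ u, c • u = c' • x) (ℓ : ℤ) :
    ∃ u, c • u = c' • (decompose Mgr x ℓ : M) := by
  obtain ⟨u, hu⟩ := h
  refine ⟨decompose Mgr u (ℓ + d' - d), ?_⟩
  rw [← hc.decompose_smul, hu, hc'.decompose_smul, add_sub_cancel_right]

end ActsWithWeight

end Weights

lemma exists_eq_pow_mul_pow_mul_pow_of_mem_closure {A : Type*} [CommMonoid A] {x y z r : A}
    (hr : r ∈ Submonoid.closure {x, y, z}) : ∃ i j k : ℕ, r = x ^ i * y ^ j * z ^ k := by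
  induction hr using Submonoid.closure_induction with
  | mem r hr =>
    rcases hr with rfl | rfl | rfl
    · exact ⟨1, 0, 0, by simp⟩
    · exact ⟨0, 1, 0, by simp⟩
    · exact ⟨0, 0, 1, by simp⟩
  | one => exact ⟨0, 0, 0, by simp⟩
  | mul r s _ _ ihr ihs =>
    obtain ⟨i, j, k, rfl⟩ := ihr
    obtain ⟨i', j', k', rfl⟩ := ihs
    exact ⟨i + i', j + j', k + k', by simp only [pow_add]; ac_rfl⟩

section WeightGrading

open scoped Pointwise

variable {B M A : Type*} [CommRing B] [AddCommGroup M] [Module B M]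
  [CommRing A] [Algebra B A] [Module A M]

/-- The `G_m`-weight decomposition of `M` for `A = B[z₁, z₂, t]`, with `M` generated in weight `0`. -/
structure IsWeightGrading (Mgr : ℤ → Submodule B M) (z₁ z₂ t : A) (a b : ℤ) : Prop where
  adjoin_eq_top : Algebra.adjoin B {z₁, z₂, t} = ⊤
  span_eq_top : Submodule.span A (Mgr 0 : Set M) = ⊤
  weight_z₁ : ActsWithWeight Mgr z₁ a
  weight_z₂ : ActsWithWeight Mgr z₂ 0
  weight_t : ActsWithWeight Mgr t b

namespace IsWeightGrading

variable {Mgr : ℤ → Submodule B M} {z₁ z₂ t : A} {a b : ℤ}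

lemma weight_monomial (h : IsWeightGrading Mgr z₁ z₂ t a b) (i j k : ℕ) :
    ActsWithWeight Mgr (z₁ ^ i * z₂ ^ j * t ^ k) (i * a + k * b) := by
  simpa using ((h.weight_z₁.pow i).mul (h.weight_z₂.pow j)).mul (h.weight_t.pow k)

variable [IsScalarTower B A M] [Decomposition Mgr]

lemma mem_of_monomial_smul_mem (h : IsWeightGrading Mgr z₁ z₂ t a b) {N : Submodule A M}
    {s : ℤ} (hN : ∀ i j k : ℕ, i * a + k * b = s → ∀ g ∈ Mgr 0, (z₁ ^ i * z₂ ^ j * t ^ k) • g ∈ N)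
    {x : M} (hx : x ∈ Mgr s) : x ∈ N := by
  let π : M →ₗ[B] M :=
    (Mgr s).subtype ∘ₗ component B ℤ (fun i => Mgr i) s ∘ₗ (decomposeLinearEquiv Mgr).toLinearMap
  have hπ : ∀ y, π y = decompose Mgr y s := fun _ => rfl
  have hmonoid : Submodule.span B (Submonoid.closure {z₁, z₂, t} : Set A) = ⊤ := by
    rw [← Algebra.adjoin_eq_span, h.adjoin_eq_top, Algebra.top_toSubmodule]
  have hspan :
      Submodule.span B ((Submonoid.closure {z₁, z₂, t} : Set A) • (Mgr 0 : Set M)) = ⊤ := by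
    rw [Submodule.span_smul_of_span_eq_top hmonoid, h.span_eq_top, Submodule.restrictScalars_top]
  have key : ∀ y, π y ∈ N := fun y => by
    induction (hspan ▸ Submodule.mem_top : y ∈ Submodule.span B _)
      using Submodule.span_induction with
    | mem y hy =>
      obtain ⟨r, hr, g, hg, rfl⟩ := hy
      obtain ⟨i, j, k, rfl⟩ := exists_eq_pow_mul_pow_mul_pow_of_mem_closure hr
      have hmem := h.weight_monomial i j k 0 g hg
      rw [zero_add] at hmem
      rw [hπ]
      by_cases hs : i * a + k * b = s
      · rw [← hs, decompose_of_mem_same Mgr hmem]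
        exact hN i j k hs g hg
      · rw [decompose_of_mem_ne Mgr hmem hs]
        exact N.zero_mem
    | zero => simp
    | add y z _ _ hy hz => simpa using N.add_mem hy hz
    | smul c y _ hy => simpa using N.smul_of_tower_mem c hy
  simpa [hπ, decompose_of_mem_same Mgr hx] using key x

lemma exists_t_smul_eq_of_neg (h : IsWeightGrading Mgr z₁ z₂ t a b) (ha : 0 ≤ a) {s : ℤ}
    (hs : s < 0) {x : M} (hx : x ∈ Mgr s) : ∃ w, t • w = x := by
  refine mem_span_singleton_smul_top_iff.mp (h.mem_of_monomial_smul_mem ?_ hx)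
  rintro i j (_ | k) hw g _
  · push_cast at hw
    nlinarith
  exact mem_span_singleton_smul_top_iff.mpr ⟨(z₁ ^ i * z₂ ^ j * t ^ k) • g, by
    rw [smul_smul]; congr 1; ring⟩

lemma exists_z₁_pow_smul_eq (h : IsWeightGrading Mgr z₁ z₂ t a b) (ha : 0 ≤ a) (hb : b ≤ 0)
    {n : ℕ} {s : ℤ} (hs : n * a < s) {x : M} (hx : x ∈ Mgr s) : ∃ w, z₁ ^ (n + 1) • w = x := by
  refine mem_span_singleton_smul_top_iff.mp (h.mem_of_monomial_smul_mem ?_ hx)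
  intro i j k hw g _
  have hni : n < i := by
    have : (n : ℤ) * a < i * a := by nlinarith
    exact_mod_cast lt_of_mul_lt_mul_right this ha
  obtain ⟨e, rfl⟩ := Nat.exists_eq_add_of_lt hni
  exact mem_span_singleton_smul_top_iff.mpr ⟨(z₁ ^ e * z₂ ^ j * t ^ k) • g, by
    rw [smul_smul]; congr 1; ring⟩

lemma exists_annihilated_sub_t_smul (h : IsWeightGrading Mgr z₁ z₂ t a b) (ha : 0 ≤ a)
    (hb : b < 0) (hz : z₁ * z₂ = 0) {n : ℕ} {ℓ : ℤ} {x : M} (hx : x ∈ Mgr ℓ)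
    (h₁ : ∃ u, t • u = z₁ ^ n • x) (h₂ : ∃ v, t • v = z₂ ^ n • x) :
    ∃ w, z₁ ^ (n + 1) • (x - t • w) = 0 ∧ z₂ ^ (n + 1) • (x - t • w) = 0 := by
  rcases lt_or_ge ℓ 0 with hℓ | hℓ
  · obtain ⟨w, rfl⟩ := h.exists_t_smul_eq_of_neg ha hℓ hx
    exact ⟨w, by simp, by simp⟩
  obtain ⟨u, hu, htu⟩ := h.weight_t.exists_smul_eq_of_mem (h.weight_z₁.pow n ℓ x hx) h₁
  obtain ⟨w, rfl⟩ := h.exists_z₁_pow_smul_eq ha hb.le (n := n) (by linarith) hu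
  obtain ⟨v, hv, htv⟩ := h.weight_t.exists_smul_eq_of_mem (h.weight_z₂.pow n ℓ x hx) h₂
  obtain ⟨w₂, rfl⟩ := h.exists_z₁_pow_smul_eq ha hb.le (n := 0) (by push_cast; linarith) hv
  refine ⟨z₁ • w, ?_, ?_⟩
  · linear_combination (norm := module) z₁ • htu.symm
  · linear_combination (norm := module) z₂ • htv.symm + t • hz • w₂ - (z₂ ^ n * t) • hz • w

lemma mem_powTorsion_sup_of_pow_smul_mem (h : IsWeightGrading Mgr z₁ z₂ t a b) (ha : 0 ≤ a)
    (hb : b < 0) (hz : z₁ * z₂ = 0) {n : ℕ} {x : M}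
    (h₁ : z₁ ^ n • x ∈ Ideal.span {t} • (⊤ : Submodule A M))
    (h₂ : z₂ ^ n • x ∈ Ideal.span {t} • (⊤ : Submodule A M)) :
    x ∈ powTorsion (Ideal.span {z₁, z₂}) M ⊔ Ideal.span {t} • (⊤ : Submodule A M) := by
  classical
  rw [← sum_support_decompose Mgr x]
  refine Submodule.sum_mem _ fun ℓ _ => ?_
  obtain ⟨w, hw₁, hw₂⟩ := h.exists_annihilated_sub_t_smul ha hb hz (decompose Mgr x ℓ).2
    (h.weight_t.exists_smul_eq_smul_decompose (h.weight_z₁.pow n)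
      (mem_span_singleton_smul_top_iff.mp h₁) ℓ)
    (h.weight_t.exists_smul_eq_smul_decompose (h.weight_z₂.pow n)
      (mem_span_singleton_smul_top_iff.mp h₂) ℓ)
  rw [← sub_add_cancel (decompose Mgr x ℓ : M) (t • w)]
  exact Submodule.add_mem_sup (mem_powTorsion_span_pair hw₁ hw₂)
    (mem_span_singleton_smul_top_iff.mpr ⟨w, rfl⟩)

lemma range_mkQ_comp_subtype_powTorsion (h : IsWeightGrading Mgr z₁ z₂ t a b) (ha : 0 ≤ a)
    (hb : b < 0) (hz : z₁ * z₂ = 0) :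
    LinearMap.range ((Ideal.span {t} • (⊤ : Submodule A M)).mkQ ∘ₗ
        (powTorsion (Ideal.span {z₁, z₂}) M).subtype) =
      powTorsion (Ideal.span {z₁, z₂}) (M ⧸ Ideal.span {t} • (⊤ : Submodule A M)) := by
  refine le_antisymm ?_ fun q hq => ?_
  · rintro _ ⟨x, rfl⟩
    exact map_mem_powTorsion (Ideal.span {t} • (⊤ : Submodule A M)).mkQ x.2
  obtain ⟨x, rfl⟩ := Submodule.mkQ_surjective _ q
  obtain ⟨n, hn⟩ := exists_pow_smul_eq_zero_of_mem_powTorsion hq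
  have hmem : ∀ r ∈ Ideal.span {z₁, z₂}, r ^ n • x ∈ Ideal.span {t} • (⊤ : Submodule A M) :=
    fun r hr => (Submodule.Quotient.mk_eq_zero _).mp (hn r hr)
  exact mkQ_mem_range_mkQ_comp_subtype (h.mem_powTorsion_sup_of_pow_smul_mem ha hb hz
    (hmem z₁ (Ideal.subset_span (by simp))) (hmem z₂ (Ideal.subset_span (by simp))))

end IsWeightGrading

end WeightGrading

lemma Ideal.Quotient.mk_mul_mk_span_mul_eq_zero {R : Type*} [CommRing R] (x y : R) :
    Ideal.Quotient.mk (Ideal.span {x * y}) x * Ideal.Quotient.mk (Ideal.span {x * y}) y = 0 := by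
  rw [← map_mul, Ideal.Quotient.eq_zero_iff_mem]
  exact Ideal.mem_span_singleton_self _

lemma Ideal.Quotient.adjoin_mk_X_fin_three_eq_top {B : Type*} [CommRing B]
    (J : Ideal (MvPolynomial (Fin 3) B)) :
    Algebra.adjoin B {Ideal.Quotient.mk J (MvPolynomial.X 0),
      Ideal.Quotient.mk J (MvPolynomial.X 1), Ideal.Quotient.mk J (MvPolynomial.X 2)} = ⊤ := by
  have himage : {Ideal.Quotient.mk J (MvPolynomial.X 0), Ideal.Quotient.mk J (MvPolynomial.X 1),
      Ideal.Quotient.mk J (MvPolynomial.X 2)} =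
      Ideal.Quotient.mkₐ B J '' Set.range MvPolynomial.X := by
    ext
    simp [Fin.exists_fin_succ, eq_comm]
  rw [himage, Algebra.adjoin_image, MvPolynomial.adjoin_range_X, Algebra.map_top,
    AlgHom.range_eq_top]
  exact Ideal.Quotient.mkₐ_surjective B J

lemma span_eq_top_of_surjective_of_single_mem {A M ι : Type*} [CommRing A] [AddCommGroup M]
    [Module A M] [Finite ι] [DecidableEq ι] (φ : (ι → A) →ₗ[A] M) (hφ : Function.Surjective φ)
    {S : Set M} (hS : ∀ i, φ (Pi.single i 1) ∈ S) : Submodule.span A S = ⊤ := by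
  rw [eq_top_iff, ← LinearMap.range_eq_top.mpr hφ, LinearMap.range_eq_map,
    ← (Pi.basisFun A ι).span_eq, Submodule.map_span, Submodule.span_le]
  rintro _ ⟨_, ⟨i, rfl⟩, rfl⟩
  exact Submodule.subset_span (by simpa using hS i)

lemma isSMulRegular_of_flat_polynomial {k A M : Type*} [CommRing k] [Nontrivial k] [CommRing A]
    [Algebra k A] [AddCommGroup M] [Module A M] (t : A)
    (hflat : letI : Module (Polynomial k) M :=
        Module.compHom M (Polynomial.aeval t : Polynomial k →ₐ[k] A).toRingHom
      Module.Flat (Polynomial k) M) :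
    IsSMulRegular M t := by
  let : Module (Polynomial k) M :=
    Module.compHom M (Polynomial.aeval t : Polynomial k →ₐ[k] A).toRingHom
  have hX := Module.Flat.isSMulRegular_of_isRegular (M := M) (Polynomial.isRegular_X (R := k))
  intro v w hvw
  apply hX
  change Polynomial.aeval t Polynomial.X • v = Polynomial.aeval t Polynomial.X • w
  simpa using hvw

theorem torsion_commutes_with_central_fiber_general
    (k : Type) [Field k]
    (B : Type) [CommRing B] [Algebra k B]
    (a b : ℤ) (ha : 0 < a) (hb : b < 0)
    (m : ℕ)
    (M : Type) [AddCommGroup M]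
    [Module (MvPolynomial (Fin 3) B ⧸
        Ideal.span {(MvPolynomial.X 0 : MvPolynomial (Fin 3) B) * MvPolynomial.X 1}) M]
    [Module B M]
    [IsScalarTower B (MvPolynomial (Fin 3) B ⧸
        Ideal.span {(MvPolynomial.X 0 : MvPolynomial (Fin 3) B) * MvPolynomial.X 1}) M]
    (Mgr : ℤ → Submodule B M) :
    letI A := MvPolynomial (Fin 3) B ⧸
        Ideal.span {(MvPolynomial.X 0 : MvPolynomial (Fin 3) B) * MvPolynomial.X 1}
    letI z₁ : A := Ideal.Quotient.mk _ (MvPolynomial.X 0)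
    letI z₂ : A := Ideal.Quotient.mk _ (MvPolynomial.X 1)
    letI t : A := Ideal.Quotient.mk _ (MvPolynomial.X 2)
    letI I : Ideal A := Ideal.span {z₁, z₂}
    -- `M = ⊕ M_[ℓ]` is the weight decomposition of the `G_m`-action:
    DirectSum.IsInternal Mgr →
    (∀ l, ∀ x ∈ Mgr l, z₁ • x ∈ Mgr (l + a)) →
    (∀ l, ∀ x ∈ Mgr l, z₂ • x ∈ Mgr l) →
    (∀ l, ∀ x ∈ Mgr l, t • x ∈ Mgr (l + b)) →
    -- `φ : R = A^m → M` is a `G_m`-equivariant quotient: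
    ∀ φ : (Fin m → A) →ₗ[A] M, Function.Surjective φ →
    (∀ i, φ (Pi.single i 1) ∈ Mgr 0) →
    -- `M` is flat over `k[t]`:
    (letI : Module (Polynomial k) M :=
        Module.compHom M (Polynomial.aeval t : Polynomial k →ₐ[k] A).toRingHom
     Module.Flat (Polynomial k) M) →
    -- conclusion: `M_I ⊗_A A₀ ≅ (M₀)_{I₀}` via the natural map
    letI MI : Submodule A M := ⨆ n : ℕ, Submodule.torsionBySet A M ((I ^ n : Ideal A) : Set A)
    letI g := (Submodule.mkQ (Ideal.span {t} • (⊤ : Submodule A M))).comp MI.subtype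
    LinearMap.ker g = Ideal.span {t} • (⊤ : Submodule A MI) ∧
      LinearMap.range g =
        ⨆ n : ℕ, Submodule.torsionBySet A (M ⧸ Ideal.span {t} • (⊤ : Submodule A M))
          ((I ^ n : Ideal A) : Set A) := by
  intro hint hz₁ hz₂ ht φ hφ hφ₀ hflat
  let := hint.chooseDecomposition
  have hgr : IsWeightGrading Mgr _ _ _ a b :=
    ⟨Ideal.Quotient.adjoin_mk_X_fin_three_eq_top _,
      span_eq_top_of_surjective_of_single_mem φ hφ hφ₀, hz₁, fun l x hx => by simpa using hz₂ l x hx, ht⟩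
  have hz := Ideal.Quotient.mk_mul_mk_span_mul_eq_zero (MvPolynomial.X 0 : MvPolynomial (Fin 3) B)
    (MvPolynomial.X 1)
  exact ⟨ker_mkQ_comp_subtype_of_smul_mem _ fun _ =>
      mem_powTorsion_of_smul_mem (isSMulRegular_of_flat_polynomial _ hflat),
    hgr.range_mkQ_comp_subtype_powTorsion ha.le hb hz⟩

/-- (Lemma A of the paper.)  Let `A = B[z₁, z₂, t]/(z₁z₂)`, `B` an integral `k`-algebra of
finite type, with the `G_m`-action `z₁ ↦ σ^a z₁`, `z₂ ↦ z₂`, `t ↦ σ^b t`, `a > 0 > b`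
(encoded as a `ℤ`-grading `Mgr` of the module by `B`-submodules).  Let `φ : A^m → M` be a
`G_m`-equivariant quotient (the standard generators have weight `0`) with `M` flat over
`k[t]`, let `I = (z₁, z₂)`, `A₀ = A/(t)`, `M₀ = M ⊗_A A₀`, and let `M_I` (resp.
`(M₀)_{I₀}`) denote the submodule of elements annihilated by a power of `I` (resp. `I₀`).
Then the natural homomorphism `M_I ⊗_A A₀ → (M₀)_{I₀}` is an isomorphism; formalized: the
map `g : M_I → M/(t·M)` has kernel `t·M_I` and image exactly the `I`-power-torsion of
`M/(t·M)`. -/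
theorem torsion_commutes_with_central_fiber
    (k : Type) [Field k] [IsAlgClosed k] [CharZero k]
    (B : Type) [CommRing B] [IsDomain B] [Algebra k B] [Algebra.FiniteType k B]
    (a b : ℤ) (ha : 0 < a) (hb : b < 0)
    (m : ℕ)
    (M : Type) [AddCommGroup M]
    [Module (MvPolynomial (Fin 3) B ⧸
        Ideal.span {(MvPolynomial.X 0 : MvPolynomial (Fin 3) B) * MvPolynomial.X 1}) M]
    [Module B M]
    [IsScalarTower B (MvPolynomial (Fin 3) B ⧸
        Ideal.span {(MvPolynomial.X 0 : MvPolynomial (Fin 3) B) * MvPolynomial.X 1}) M]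
    (Mgr : ℤ → Submodule B M) :
    letI A := MvPolynomial (Fin 3) B ⧸
        Ideal.span {(MvPolynomial.X 0 : MvPolynomial (Fin 3) B) * MvPolynomial.X 1}
    letI z₁ : A := Ideal.Quotient.mk _ (MvPolynomial.X 0)
    letI z₂ : A := Ideal.Quotient.mk _ (MvPolynomial.X 1)
    letI t : A := Ideal.Quotient.mk _ (MvPolynomial.X 2)
    letI I : Ideal A := Ideal.span {z₁, z₂}
    -- `M = ⊕ M_[ℓ]` is the weight decomposition of the `G_m`-action:
    DirectSum.IsInternal Mgr →
    (∀ l, ∀ x ∈ Mgr l, z₁ • x ∈ Mgr (l + a)) →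
    (∀ l, ∀ x ∈ Mgr l, z₂ • x ∈ Mgr l) →
    (∀ l, ∀ x ∈ Mgr l, t • x ∈ Mgr (l + b)) →
    -- `φ : R = A^m → M` is a `G_m`-equivariant quotient:
    ∀ φ : (Fin m → A) →ₗ[A] M, Function.Surjective φ →
    (∀ i, φ (Pi.single i 1) ∈ Mgr 0) →
    -- `M` is flat over `k[t]`:
    (letI : Module (Polynomial k) M :=
        Module.compHom M (Polynomial.aeval t : Polynomial k →ₐ[k] A).toRingHom
     Module.Flat (Polynomial k) M) →
    -- conclusion: `M_I ⊗_A A₀ ≅ (M₀)_{I₀}` via the natural map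
    letI MI : Submodule A M := ⨆ n : ℕ, Submodule.torsionBySet A M ((I ^ n : Ideal A) : Set A)
    letI g := (Submodule.mkQ (Ideal.span {t} • (⊤ : Submodule A M))).comp MI.subtype
    LinearMap.ker g = Ideal.span {t} • (⊤ : Submodule A MI) ∧
      LinearMap.range g =
        ⨆ n : ℕ, Submodule.torsionBySet A (M ⧸ Ideal.span {t} • (⊤ : Submodule A M))
          ((I ^ n : Ideal A) : Set A) :=
  torsion_commutes_with_central_fiber_general k B a b ha hb m M Mgr
end

section
/- In the setting of the previous lemma (A = B[z1,z2,t]/(z1z2), Gm-equivariant quotient φ: R = A^{⊕m} → M with M flat over k[t]): let A^- = A/(z2), R^- = R ⊗_A A^-, K^- = ker(R^- → M ⊗_A A^-); define C_gen ⊂ B^{⊕m} as the B-submodule such that C_gen ⊗_B B[t, t^{-1}] equals the image of ((K^-_{(t)})_{(z1)} ∩ R^-_{(t)}) ⊗ A^-_{(t)}/(z1) inside B[t,t^{-1}]^{⊕m}; analogously define C_0 ⊂ B^{⊕m} from K_0^- = ker(R_0^- → M_0^-) at t = 0 as ((K_0^-)_{(z1)} ∩ R_0^-) ⊗ A_0^-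 /(z1). Then C_0 = C_gen as B-submodules of B^{⊕m}. -/
/-! Both sets consist of the `c` for which `z₁ⁿ • φ c ∈ z₁ⁿ⁺¹ M` for some `n`. Multiplying by `z₁`
kills the `z₂`-part since `z₁ z₂ = 0`, so both conditions become relations in `M` between the
weight-`0` element `x = φ c` and multiples of `z₁`, `t`. As `M` is generated by weight-`0`
elements and `z₁, z₂, t` have weights `a > 0, 0, b < 0`, every element of negative weight is
divisible by `t`, and every element of weight `> n a` by `z₁ⁿ⁺¹`. Comparing weight components,
`z₁ⁿ tⁱ⁺¹ x = z₁ⁿ⁺¹ u` becomes `t (z₁ⁿ tⁱ x - z₁ⁿ⁺¹ u') = 0`, and `t` is a nonzerodivisor on `M`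
by flatness over `k[t]`, so the powers of `t` can be removed one by one; likewise in
`z₁ⁿ x = z₁ⁿ⁺¹ u + t v` the relevant component of `v` has weight `> n a`, so the `t`-term is
absorbed. -/

open DirectSum

section Graded

variable {B M : Type*} [CommRing B] [AddCommGroup M] [Module B M]

def ShiftsGrade {A : Type*} [SMul A M] (Mgr : ℤ → Submodule B M) (α : A) (s : ℤ) : Prop :=
  ∀ l, ∀ x ∈ Mgr l, α • x ∈ Mgr (l + s)

variable {Mgr : ℤ → Submodule B M}

namespace ShiftsGrade

variable {A : Type*} {α β : A} {s s' : ℤ}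

theorem mul [Monoid A] [MulAction A M] (hα : ShiftsGrade Mgr α s) (hβ : ShiftsGrade Mgr β s') :
    ShiftsGrade Mgr (α * β) (s + s') := fun l x hx => by
  rw [mul_smul, add_comm s, ← add_assoc]
  exact hα _ _ (hβ l x hx)

theorem pow [Monoid A] [MulAction A M] (hα : ShiftsGrade Mgr α s) :
    ∀ n : ℕ, ShiftsGrade Mgr (α ^ n) (n * s)
  | 0 => fun l x hx => by simpa using hx
  | n + 1 => by
    rw [pow_succ]
    convert (hα.pow n).mul hα using 1
    push_cast
    ring

theorem decompose_smul [Monoid A] [DistribMulAction A M] [Decomposition Mgr]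
    (hα : ShiftsGrade Mgr α s) (d : ℤ) (x : M) :
    (decompose Mgr (α • x) d : M) = α • (decompose Mgr x (d - s) : M) := by
  induction x using DirectSum.Decomposition.inductionOn Mgr with
  | zero => simp
  | @homogeneous e y =>
    by_cases h : e + s = d
    · subst h
      rw [decompose_of_mem_same _ (hα _ _ y.2), add_sub_cancel_right,
        decompose_of_mem_same _ y.2]
    · rw [decompose_of_mem_ne _ (hα _ _ y.2) h, decompose_of_mem_ne _ y.2 (by omega), smul_zero]
  | add x y hx hy =>
    simp only [smul_add, decompose_add, DirectSum.add_apply, Submodule.coe_add, hx, hy]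

end ShiftsGrade

theorem grade_le_of_span_range_eq_top [Decomposition Mgr] {ι : Type*} {gen : ι → M}
    {deg : ι → ℤ} (hgen : ∀ i, gen i ∈ Mgr (deg i))
    (hspan : Submodule.span B (Set.range gen) = ⊤) {S : Submodule B M} {d : ℤ}
    (hS : ∀ i, deg i = d → gen i ∈ S) : Mgr d ≤ S := by
  suffices h : ∀ y ∈ Submodule.span B (Set.range gen), (decompose Mgr y d : M) ∈ S by
    intro x hx
    simpa [decompose_of_mem_same Mgr hx] using h x (hspan ▸ Submodule.mem_top)
  intro y hy
  induction hy using Submodule.span_induction with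
  | mem _ h =>
    obtain ⟨i, rfl⟩ := h
    by_cases hi : deg i = d
    · rw [decompose_of_mem_same _ (hi ▸ hgen i)]
      exact hS i hi
    · rw [decompose_of_mem_ne _ (hgen i) hi]
      exact zero_mem S
  | zero => simp
  | add x y _ _ hx hy => simpa [decompose_add] using add_mem hx hy
  | smul r x _ hx => simpa [decompose_smul, DirectSum.smul_apply] using S.smul_mem r hx

variable {A : Type*} [CommRing A] [Module A M] [Decomposition Mgr]
  {γ z₁ t : A} {s a b d : ℤ} {x : M}

theorem exists_smul_eq_of_exists_smul_eq_smul (hγ : ShiftsGrade Mgr γ s)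
    (ht : ShiftsGrade Mgr t b) (hreg : IsSMulRegular M t)
    (hdiv : ∀ y ∈ Mgr (d + b - s), ∃ u, t • u = y) (hx : x ∈ Mgr d)
    (htx : ∃ u, γ • u = t • x) : ∃ y, γ • y = x := by
  obtain ⟨u, hu⟩ := htx
  obtain ⟨u₁, hu₁⟩ := hdiv _ (decompose Mgr u (d + b - s)).2
  refine ⟨u₁, hreg ?_⟩
  calc t • γ • u₁ = γ • t • u₁ := smul_comm t γ u₁
    _ = (decompose Mgr (γ • u) (d + b) : M) := by rw [hu₁, hγ.decompose_smul]
    _ = t • x := by rw [hu, decompose_of_mem_same _ (ht d x hx)]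

theorem exists_smul_eq_of_exists_smul_add_smul_eq (hγ : ShiftsGrade Mgr γ s)
    (ht : ShiftsGrade Mgr t b) (hdiv : ∀ y ∈ Mgr (d - b), ∃ u, γ • u = y) (hx : x ∈ Mgr d)
    (h : ∃ u v, γ • u + t • v = x) : ∃ y, γ • y = x := by
  obtain ⟨u, v, rfl⟩ := h
  obtain ⟨v₁, hv₁⟩ := hdiv _ (decompose Mgr v (d - b)).2
  refine ⟨decompose Mgr u (d - s) + t • v₁, ?_⟩
  rw [← decompose_of_mem_same Mgr hx, decompose_add, DirectSum.add_apply, Submodule.coe_add,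
    hγ.decompose_smul, ht.decompose_smul, ← hv₁, smul_add, smul_comm]

theorem exists_pow_smul_eq_of_exists_pow_mul_pow_smul_eq (ha : 0 ≤ a) (hb : b < 0)
    (hz₁ : ShiftsGrade Mgr z₁ a) (ht : ShiftsGrade Mgr t b) (hreg : IsSMulRegular M t)
    (hdiv : ∀ d < 0, ∀ y ∈ Mgr d, ∃ u, t • u = y) (hx : x ∈ Mgr 0) (n : ℕ) :
    ∀ i : ℕ, (∃ y, z₁ ^ (n + 1) • y = (z₁ ^ n * t ^ i) • x) → ∃ y, z₁ ^ (n + 1) • y = z₁ ^ n • x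
  | 0, h => by simpa using h
  | i + 1, h => by
    refine exists_pow_smul_eq_of_exists_pow_mul_pow_smul_eq ha hb hz₁ ht hreg hdiv hx n i ?_
    refine exists_smul_eq_of_exists_smul_eq_smul (hz₁.pow (n + 1)) ht hreg (hdiv _ ?_)
      ((hz₁.pow n).mul (ht.pow i) 0 x hx) ?_
    · push_cast
      nlinarith
    · rwa [smul_smul, mul_left_comm, ← pow_succ']

end Graded

theorem Submodule.mem_ideal_span_singleton_smul_top_iff {A M : Type*} [CommRing A]
    [AddCommGroup M] [Module A M] {r : A} {x : M} :
    x ∈ Ideal.span {r} • (⊤ : Submodule A M) ↔ ∃ y, r • y = x := by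
  open Pointwise in
  simp [Submodule.ideal_span_singleton_smul, Submodule.mem_smul_pointwise_iff_exists]

theorem LinearMap.mem_ker_sup_ideal_smul_top_iff {A R M : Type*} [CommRing A] [AddCommGroup R]
    [Module A R] [AddCommGroup M] [Module A M] {φ : R →ₗ[A] M} (hφ : Function.Surjective φ)
    (I : Ideal A) (v : R) :
    v ∈ LinearMap.ker φ ⊔ I • (⊤ : Submodule A R) ↔ φ v ∈ I • (⊤ : Submodule A M) := by
  rw [sup_comm, ← Submodule.comap_map_eq, Submodule.mem_comap, Submodule.map_smul'',
    Submodule.map_top, LinearMap.range_eq_top.2 hφ]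

theorem isSMulRegular_of_flat_aeval {R A M : Type*} [CommRing R] [CommRing A] [Algebra R A]
    [AddCommGroup M] [Module A M] (t : A)
    (hflat : letI : Module (Polynomial R) M :=
        Module.compHom M (Polynomial.aeval t : Polynomial R →ₐ[R] A).toRingHom
      Module.Flat (Polynomial R) M) :
    IsSMulRegular M t := by
  let _ : Module (Polynomial R) M :=
    Module.compHom M (Polynomial.aeval t : Polynomial R →ₐ[R] A).toRingHom
  have hX : IsSMulRegular M (Polynomial.X : Polynomial R) :=
    Module.Flat.isSMulRegular_of_nonZeroDivisors Polynomial.X_mem_nonzeroDivisors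
  intro x y hxy
  apply hX
  show Polynomial.aeval t Polynomial.X • x = Polynomial.aeval t Polynomial.X • y
  rwa [Polynomial.aeval_X]

theorem smul_eq_zero_of_mem_span_smul_top {A M : Type*} [CommRing A] [AddCommGroup M]
    [Module A M] {z₁ z₂ : A} (hzz : z₁ * z₂ = 0) {y : M}
    (hy : y ∈ Ideal.span {z₂} • (⊤ : Submodule A M)) : z₁ • y = 0 := by
  obtain ⟨y, rfl⟩ := Submodule.mem_ideal_span_singleton_smul_top_iff.1 hy
  rw [smul_smul, hzz, zero_smul]

section Setting

variable {B A M : Type*} [CommRing B] [CommRing A] [AddCommGroup M] [Module A M] [Module B M]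
  {Mgr : ℤ → Submodule B M} {z₁ z₂ t : A} {a b : ℤ}

def monomial3 (z₁ z₂ t : A) (e : ℕ × ℕ × ℕ) : A := z₁ ^ e.1 * z₂ ^ e.2.1 * t ^ e.2.2

theorem shiftsGrade_monomial3 (hz₁ : ShiftsGrade Mgr z₁ a) (hz₂ : ShiftsGrade Mgr z₂ 0)
    (ht : ShiftsGrade Mgr t b) (e : ℕ × ℕ × ℕ) :
    ShiftsGrade Mgr (monomial3 z₁ z₂ t e) (e.1 * a + e.2.2 * b) := by
  simpa [monomial3] using ((hz₁.pow e.1).mul (hz₂.pow e.2.1)).mul (ht.pow e.2.2)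

variable [Algebra B A] [IsScalarTower B A M] {m : ℕ} {φ : (Fin m → A) →ₗ[A] M}

theorem span_range_monomial3_smul_eq_top
    (hA : Submodule.span B (Set.range (monomial3 z₁ z₂ t)) = ⊤) (hφ : Function.Surjective φ) :
    Submodule.span B (Set.range fun p : (ℕ × ℕ × ℕ) × Fin m =>
      monomial3 z₁ z₂ t p.1 • φ (Pi.single p.2 1)) = ⊤ := by
  have hgen : Submodule.span A (Set.range fun j => φ (Pi.single j 1)) = ⊤ := by
    have hsingle : Submodule.span A (Set.range fun j => (Pi.single j 1 : Fin m → A)) = ⊤ := by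
      convert (Pi.basisFun A (Fin m)).span_eq
      simp
    rw [Set.range_comp' φ, Submodule.span_image, hsingle, Submodule.map_top,
      LinearMap.range_eq_top.2 hφ]
  rw [← Set.range_smul_range (monomial3 z₁ z₂ t) fun j => φ (Pi.single j 1),
    Submodule.span_smul_of_span_eq_top hA, hgen, Submodule.restrictScalars_top]

theorem map_algebraMap_mem (hgen : ∀ j, φ (Pi.single j 1) ∈ Mgr 0) (c : Fin m → B) :
    φ (fun j => algebraMap B A (c j)) ∈ Mgr 0 := by
  have hc : (fun j => algebraMap B A (c j)) = ∑ j, c j • (Pi.single j 1 : Fin m → A) := by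
    ext j
    simp [Finset.sum_apply, Pi.single_apply, Algebra.smul_def]
  rw [hc, map_sum]
  exact Submodule.sum_mem _ fun j _ => by
    rw [LinearMap.map_smul_of_tower]
    exact Submodule.smul_mem _ _ (hgen j)

variable [DirectSum.Decomposition Mgr]

theorem grade_le_ideal_smul_top
    (hA : Submodule.span B (Set.range (monomial3 z₁ z₂ t)) = ⊤) (hφ : Function.Surjective φ)
    (hgen : ∀ j, φ (Pi.single j 1) ∈ Mgr 0) (hz₁ : ShiftsGrade Mgr z₁ a)
    (hz₂ : ShiftsGrade Mgr z₂ 0) (ht : ShiftsGrade Mgr t b) {I : Ideal A} {d : ℤ}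
    (hI : ∀ e : ℕ × ℕ × ℕ, e.1 * a + e.2.2 * b = d → monomial3 z₁ z₂ t e ∈ I) :
    Mgr d ≤ (I • (⊤ : Submodule A M)).restrictScalars B := by
  refine grade_le_of_span_range_eq_top (deg := fun p => p.1.1 * a + p.1.2.2 * b) ?_
    (span_range_monomial3_smul_eq_top hA hφ) ?_
  · intro p
    have := shiftsGrade_monomial3 hz₁ hz₂ ht p.1 0 _ (hgen p.2)
    rwa [zero_add] at this
  · intro p hp
    rw [Submodule.restrictScalars_mem]
    exact Submodule.smul_mem_smul (hI p.1 hp) Submodule.mem_top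

theorem exists_smul_eq_of_mem_grade_of_neg
    (hA : Submodule.span B (Set.range (monomial3 z₁ z₂ t)) = ⊤) (hφ : Function.Surjective φ)
    (hgen : ∀ j, φ (Pi.single j 1) ∈ Mgr 0) (hz₁ : ShiftsGrade Mgr z₁ a)
    (hz₂ : ShiftsGrade Mgr z₂ 0) (ht : ShiftsGrade Mgr t b) (ha : 0 ≤ a) {d : ℤ} (hd : d < 0)
    {y : M} (hy : y ∈ Mgr d) : ∃ u, t • u = y := by
  refine Submodule.mem_ideal_span_singleton_smul_top_iff.1
    (grade_le_ideal_smul_top hA hφ hgen hz₁ hz₂ ht (fun e he => ?_) hy)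
  have hq : e.2.2 ≠ 0 := by
    rintro hq
    rw [hq] at he
    push_cast at he
    nlinarith
  exact Ideal.mem_span_singleton.2 (dvd_mul_of_dvd_right (dvd_pow_self t hq) _)

theorem exists_pow_smul_eq_of_mem_grade_of_lt
    (hA : Submodule.span B (Set.range (monomial3 z₁ z₂ t)) = ⊤) (hφ : Function.Surjective φ)
    (hgen : ∀ j, φ (Pi.single j 1) ∈ Mgr 0) (hz₁ : ShiftsGrade Mgr z₁ a)
    (hz₂ : ShiftsGrade Mgr z₂ 0) (ht : ShiftsGrade Mgr t b) (ha : 0 ≤ a) (hb : b ≤ 0) (n : ℕ)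
    {d : ℤ} (hd : n * a < d) {y : M} (hy : y ∈ Mgr d) : ∃ u, z₁ ^ (n + 1) • u = y := by
  refine Submodule.mem_ideal_span_singleton_smul_top_iff.1
    (grade_le_ideal_smul_top hA hφ hgen hz₁ hz₂ ht (fun e he => ?_) hy)
  have hp : n + 1 ≤ e.1 := by
    by_contra! hp
    have : (e.1 : ℤ) * a ≤ n * a :=
      mul_le_mul_of_nonneg_right (by exact_mod_cast Nat.lt_succ_iff.1 hp) ha
    nlinarith
  exact Ideal.mem_span_singleton.2
    (dvd_mul_of_dvd_left (dvd_mul_of_dvd_left (pow_dvd_pow z₁ hp) _) _)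

end Setting

section FailureOfFlatness

variable {B A M : Type*} [CommRing B] [CommRing A] [Algebra B A] [AddCommGroup M] [Module A M]
  [Module B M] {Mgr : ℤ → Submodule B M} [DirectSum.Decomposition Mgr]
  {z₁ z₂ t : A} {a b : ℤ} {m : ℕ} {φ : (Fin m → A) →ₗ[A] M}

variable (B) in
def genericFailureOfFlatness (φ : (Fin m → A) →ₗ[A] M) (z₁ z₂ t : A) : Set (Fin m → B) :=
  {c | ∃ (n i : ℕ) (w : Fin m → A),
    ((z₁ ^ n * t ^ i) • fun j => algebraMap B A (c j)) + z₁ ^ (n + 1) • w ∈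
      LinearMap.ker φ ⊔ (Ideal.span {z₂} • (⊤ : Submodule A (Fin m → A)))}

variable (B) in
def centralFailureOfFlatness (φ : (Fin m → A) →ₗ[A] M) (z₁ z₂ t : A) : Set (Fin m → B) :=
  {c | ∃ (n : ℕ) (w : Fin m → A),
    (z₁ ^ n • fun j => algebraMap B A (c j)) + z₁ ^ (n + 1) • w ∈
      LinearMap.ker φ ⊔ (Ideal.span {z₂, t} • (⊤ : Submodule A (Fin m → A)))}

theorem mem_genericFailureOfFlatness_iff (hφ : Function.Surjective φ) (hzz : z₁ * z₂ = 0)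
    (ha : 0 ≤ a) (hb : b < 0) (hz₁ : ShiftsGrade Mgr z₁ a) (ht : ShiftsGrade Mgr t b)
    (hreg : IsSMulRegular M t) (hdiv : ∀ d < 0, ∀ y ∈ Mgr d, ∃ u, t • u = y) {c : Fin m → B}
    (hc : φ (fun j => algebraMap B A (c j)) ∈ Mgr 0) :
    c ∈ genericFailureOfFlatness B φ z₁ z₂ t ↔
      ∃ (n : ℕ) (y : M), z₁ ^ (n + 1) • y = z₁ ^ n • φ (fun j => algebraMap B A (c j)) := by
  simp only [genericFailureOfFlatness, Set.mem_ofPred_eq,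
    LinearMap.mem_ker_sup_ideal_smul_top_iff hφ, map_add, map_smul]
  constructor
  · rintro ⟨n, i, w, hw⟩
    have h0 := smul_eq_zero_of_mem_span_smul_top hzz hw
    refine ⟨n + 1, exists_pow_smul_eq_of_exists_pow_mul_pow_smul_eq ha hb hz₁ ht hreg hdiv hc
      (n + 1) i ⟨-φ w, ?_⟩⟩
    linear_combination (norm := module) -h0
  · rintro ⟨n, y, hy⟩
    obtain ⟨w, hw⟩ := hφ (-y)
    exact ⟨n, 0, w, by simp [hw, hy]⟩

theorem mem_centralFailureOfFlatness_iff (hφ : Function.Surjective φ) (hzz : z₁ * z₂ = 0)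
    (hb : b < 0) (hz₁ : ShiftsGrade Mgr z₁ a) (ht : ShiftsGrade Mgr t b)
    (hdiv : ∀ (n : ℕ) (d : ℤ), n * a < d → ∀ y ∈ Mgr d, ∃ u, z₁ ^ (n + 1) • u = y)
    {c : Fin m → B} (hc : φ (fun j => algebraMap B A (c j)) ∈ Mgr 0) :
    c ∈ centralFailureOfFlatness B φ z₁ z₂ t ↔
      ∃ (n : ℕ) (y : M), z₁ ^ (n + 1) • y = z₁ ^ n • φ (fun j => algebraMap B A (c j)) := by
  simp only [centralFailureOfFlatness, Set.mem_ofPred_eq,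
    LinearMap.mem_ker_sup_ideal_smul_top_iff hφ, map_add, map_smul]
  simp only [Ideal.span_insert, Submodule.sup_smul, Submodule.mem_sup]
  constructor
  · rintro ⟨n, w, p, hp, q, hq, hpq⟩
    obtain ⟨v, rfl⟩ := Submodule.mem_ideal_span_singleton_smul_top_iff.1 hq
    have h0 := smul_eq_zero_of_mem_span_smul_top hzz hp
    refine ⟨n + 1, exists_smul_eq_of_exists_smul_add_smul_eq (hz₁.pow (n + 2)) ht
      (hdiv (n + 1) _ ?_) (hz₁.pow (n + 1) 0 _ hc) ⟨-φ w, z₁ • v, ?_⟩⟩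
    · push_cast
      linarith
    · linear_combination (norm := module) z₁ • hpq - h0
  · rintro ⟨n, y, hy⟩
    obtain ⟨w, hw⟩ := hφ (-y)
    exact ⟨n, w, 0, zero_mem _, 0, zero_mem _, by simp [hw, hy]⟩

end FailureOfFlatness

section Quotient

variable (B : Type*) [CommRing B]

theorem quotient_X_zero_mul_X_one :
    letI I := Ideal.span {(MvPolynomial.X 0 : MvPolynomial (Fin 3) B) * MvPolynomial.X 1}
    Ideal.Quotient.mk I (MvPolynomial.X 0) * Ideal.Quotient.mk I (MvPolynomial.X 1) = 0 := by
  rw [← map_mul, Ideal.Quotient.eq_zero_iff_mem]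
  exact Ideal.subset_span rfl

theorem span_range_monomial3_quotient_eq_top :
    letI I := Ideal.span {(MvPolynomial.X 0 : MvPolynomial (Fin 3) B) * MvPolynomial.X 1}
    Submodule.span B (Set.range (monomial3 (Ideal.Quotient.mk I (MvPolynomial.X 0))
      (Ideal.Quotient.mk I (MvPolynomial.X 1)) (Ideal.Quotient.mk I (MvPolynomial.X 2)))) = ⊤ := by
  rw [eq_top_iff, ← (LinearMap.range_eq_top (f := (Ideal.Quotient.mkₐ B _).toLinearMap)).2
    (Ideal.Quotient.mkₐ_surjective B _),
    LinearMap.range_eq_map, ← (MvPolynomial.basisMonomials (Fin 3) B).span_eq,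
    Submodule.map_span, Submodule.span_le]
  rintro _ ⟨_, ⟨s, rfl⟩, rfl⟩
  refine Submodule.subset_span ⟨(s 0, s 1, s 2), ?_⟩
  simp [monomial3, MvPolynomial.coe_basisMonomials, MvPolynomial.monomial_eq, Finsupp.prod_pow,
    Fin.prod_univ_three]

end Quotient

theorem generic_and_central_failure_of_flatness_agree_general
    (k : Type) [Field k]
    (B : Type) [CommRing B] [Algebra k B]
    (a b : ℤ) (ha : 0 < a) (hb : b < 0)
    (m : ℕ)
    (M : Type) [AddCommGroup M]
    [Module (MvPolynomial (Fin 3) B ⧸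
        Ideal.span {(MvPolynomial.X 0 : MvPolynomial (Fin 3) B) * MvPolynomial.X 1}) M]
    [Module B M]
    [IsScalarTower B (MvPolynomial (Fin 3) B ⧸
        Ideal.span {(MvPolynomial.X 0 : MvPolynomial (Fin 3) B) * MvPolynomial.X 1}) M]
    (Mgr : ℤ → Submodule B M) :
    letI A := MvPolynomial (Fin 3) B ⧸
        Ideal.span {(MvPolynomial.X 0 : MvPolynomial (Fin 3) B) * MvPolynomial.X 1}
    letI z₁ : A := Ideal.Quotient.mk _ (MvPolynomial.X 0)
    letI z₂ : A := Ideal.Quotient.mk _ (MvPolynomial.X 1)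
    letI t : A := Ideal.Quotient.mk _ (MvPolynomial.X 2)
    -- weight decomposition of the `G_m`-action:
    DirectSum.IsInternal Mgr →
    (∀ l, ∀ x ∈ Mgr l, z₁ • x ∈ Mgr (l + a)) →
    (∀ l, ∀ x ∈ Mgr l, z₂ • x ∈ Mgr l) →
    (∀ l, ∀ x ∈ Mgr l, t • x ∈ Mgr (l + b)) →
    -- `φ : R = A^m → M` a `G_m`-equivariant quotient:
    ∀ φ : (Fin m → A) →ₗ[A] M, Function.Surjective φ →
    (∀ i, φ (Pi.single i 1) ∈ Mgr 0) →
    -- `M` is flat over `k[t]`: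
    (letI : Module (Polynomial k) M :=
        Module.compHom M (Polynomial.aeval t : Polynomial k →ₐ[k] A).toRingHom
     Module.Flat (Polynomial k) M) →
    -- conclusion: `C_gen = C₀` inside `B^m`
    {c : Fin m → B | ∃ (n i : ℕ) (w : Fin m → A),
        ((z₁ ^ n * t ^ i) • fun j => algebraMap B A (c j)) + z₁ ^ (n + 1) • w ∈
          LinearMap.ker φ ⊔ (Ideal.span {z₂} • (⊤ : Submodule A (Fin m → A)))} =
      {c : Fin m → B | ∃ (n : ℕ) (w : Fin m → A),
        (z₁ ^ n • fun j => algebraMap B A (c j)) + z₁ ^ (n + 1) • w ∈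
          LinearMap.ker φ ⊔ (Ideal.span {z₂, t} • (⊤ : Submodule A (Fin m → A)))} := by
  intro hInt hz₁ hz₂ ht φ hφ hgen hflat
  have := hInt.chooseDecomposition
  have hz₂' : ShiftsGrade Mgr _ 0 := fun l x hx => (add_zero l).symm ▸ hz₂ l x hx
  have hA := span_range_monomial3_quotient_eq_top B
  have hzz := quotient_X_zero_mul_X_one B
  have hreg := isSMulRegular_of_flat_aeval _ hflat
  change genericFailureOfFlatness B φ _ _ _ = centralFailureOfFlatness B φ _ _ _
  ext c
  have hc := map_algebraMap_mem hgen c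
  rw [mem_genericFailureOfFlatness_iff hφ hzz ha.le hb hz₁ ht hreg
      (fun d hd _ hy => exists_smul_eq_of_mem_grade_of_neg hA hφ hgen hz₁ hz₂' ht ha.le hd hy) hc,
    mem_centralFailureOfFlatness_iff hφ hzz hb hz₁ ht
      (fun n d hd _ hy =>
        exists_pow_smul_eq_of_mem_grade_of_lt hA hφ hgen hz₁ hz₂' ht ha.le hb.le n hd hy) hc]

/-- (Lemma B of the paper.)  With `A = B[z₁, z₂, t]/(z₁z₂)` and a `G_m`-equivariant
quotient `φ : R = A^m → M` with `M` flat over `k[t]` (setup as in Lemma A): let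
`A⁻ = A/(z₂)`, `R⁻ = R ⊗_A A⁻`, `K⁻ = ker(R⁻ → M ⊗_A A⁻)`, and let
`C_gen ⊆ B^m` be the `B`-submodule with
`C_gen ⊗_B B[t,t⁻¹] = ((K⁻_{(t)})_{(z₁)} ∩ R⁻_{(t)}) ⊗ A⁻_{(t)}/(z₁)` inside
`B[t,t⁻¹]^m`; analogously let `C₀ ⊆ B^m` be defined from
`K₀⁻ = ker(R₀⁻ → M₀⁻)` at `t = 0` as `((K₀⁻)_{(z₁)} ∩ R₀⁻) ⊗ A₀⁻/(z₁)`.  Then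
`C₀ = C_gen` as `B`-submodules of `B^m`.

Formalization: since `z₁` and `t` act invertibly after localization and are regular on
`R⁻ = B[z₁,t]^m`, a constant vector `c ∈ B^m` lies in `C_gen` iff some
`z₁^n t^i c + z₁^{n+1} w` lies in `K⁻` (whose preimage in `R` is `K + z₂R`), and `c ∈ C₀`
iff some `z₁^n c + z₁^{n+1} w` lies in `K₀⁻` (preimage `K + (z₂, t)R`). -/
theorem generic_and_central_failure_of_flatness_agree
    (k : Type) [Field k] [IsAlgClosed k] [CharZero k]
    (B : Type) [CommRing B] [IsDomain B] [Algebra k B] [Algebra.FiniteType k B]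
    (a b : ℤ) (ha : 0 < a) (hb : b < 0)
    (m : ℕ)
    (M : Type) [AddCommGroup M]
    [Module (MvPolynomial (Fin 3) B ⧸
        Ideal.span {(MvPolynomial.X 0 : MvPolynomial (Fin 3) B) * MvPolynomial.X 1}) M]
    [Module B M]
    [IsScalarTower B (MvPolynomial (Fin 3) B ⧸
        Ideal.span {(MvPolynomial.X 0 : MvPolynomial (Fin 3) B) * MvPolynomial.X 1}) M]
    (Mgr : ℤ → Submodule B M) :
    letI A := MvPolynomial (Fin 3) B ⧸
        Ideal.span {(MvPolynomial.X 0 : MvPolynomial (Fin 3) B) * MvPolynomial.X 1}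
    letI z₁ : A := Ideal.Quotient.mk _ (MvPolynomial.X 0)
    letI z₂ : A := Ideal.Quotient.mk _ (MvPolynomial.X 1)
    letI t : A := Ideal.Quotient.mk _ (MvPolynomial.X 2)
    -- weight decomposition of the `G_m`-action:
    DirectSum.IsInternal Mgr →
    (∀ l, ∀ x ∈ Mgr l, z₁ • x ∈ Mgr (l + a)) →
    (∀ l, ∀ x ∈ Mgr l, z₂ • x ∈ Mgr l) →
    (∀ l, ∀ x ∈ Mgr l, t • x ∈ Mgr (l + b)) →
    -- `φ : R = A^m → M` a `G_m`-equivariant quotient: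
    ∀ φ : (Fin m → A) →ₗ[A] M, Function.Surjective φ →
    (∀ i, φ (Pi.single i 1) ∈ Mgr 0) →
    -- `M` is flat over `k[t]`:
    (letI : Module (Polynomial k) M :=
        Module.compHom M (Polynomial.aeval t : Polynomial k →ₐ[k] A).toRingHom
     Module.Flat (Polynomial k) M) →
    -- conclusion: `C_gen = C₀` inside `B^m`
    {c : Fin m → B | ∃ (n i : ℕ) (w : Fin m → A),
        ((z₁ ^ n * t ^ i) • fun j => algebraMap B A (c j)) + z₁ ^ (n + 1) • w ∈
          LinearMap.ker φ ⊔ (Ideal.span {z₂} • (⊤ : Submodule A (Fin m → A)))} =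
      {c : Fin m → B | ∃ (n : ℕ) (w : Fin m → A),
        (z₁ ^ n • fun j => algebraMap B A (c j)) + z₁ ^ (n + 1) • w ∈
          LinearMap.ker φ ⊔ (Ideal.span {z₂, t} • (⊤ : Submodule A (Fin m → A)))} :=
  generic_and_central_failure_of_flatness_agree_general k B a b ha hb m M Mgr
end
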